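/- Consensus equilibria of the uncontrolled dynamics (Proposition 3): the states (x,y) = (+1·𝟙, +1·𝟙) and (x,y) = (−1·𝟙, −1·𝟙) are equilibria of the uncontrolled coevolutionary dynamics, and they are the only equilibria whose action vector is at a consensus, i.e., with x_i = x_j for all i, j ∈ V. -/
import Mathlib


/-- The quantity `δ_i(z)` determining the best-response action. -/
noncomputable def delta (n : ℕ) (A W : Fin n → Fin n → ℝ) (l b : Fin n → ℝ)
    (i : Fin n) (x y : Fin n → ℝ) : ℝ :=
  2 * b i * (1 - l i) * ∑ j, W i j * y j + (1 - b i) * ∑ j, A i j * x j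

/-- Equilibrium of the uncontrolled coevolutionary dynamics. -/
def UncontrolledEquilibrium (n : ℕ) (A W : Fin n → Fin n → ℝ) (l b : Fin n → ℝ)
    (x y : Fin n → ℝ) : Prop :=
  (∀ i, x i = -1 ∨ x i = 1) ∧ (∀ i, y i ∈ Set.Icc (-1 : ℝ) 1) ∧
  (∀ i, x i * delta n A W l b i x y ≥ 0) ∧
  (∀ i, y i = (1 - l i) * (∑ j, W i j * y j) + l i * x i)

lemma aux_fixed_one (n : ℕ) (W : Fin n → Fin n → ℝ) (l : Fin n → ℝ) (y : Fin n → ℝ)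
    (hW0 : ∀ i j, 0 ≤ W i j) (hWrow : ∀ i, ∑ j, W i j = 1)
    (hl : ∀ i, 0 < l i ∧ l i ≤ 1)
    (hle : ∀ i, y i ≤ 1)
    (heq : ∀ i, y i = (1 - l i) * (∑ j, W i j * y j) + l i) :
    ∀ i, y i = 1 := by
  rcases Nat.eq_zero_or_pos n with hn | hn
  · intro i; exact absurd i.2 (by omega)
  set f : Fin n → ℝ := fun j => 1 - y j with hf
  have hf0 : ∀ j, 0 ≤ f j := fun j => by simp [hf]; linarith [hle j]
  have hfe : ∀ i, f i = (1 - l i) * ∑ j, W i j * f j := by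
    intro i
    have : ∑ j, W i j * f j = 1 - ∑ j, W i j * y j := by
      simp [hf, mul_sub, Finset.sum_sub_distrib, hWrow i]
    rw [this, hf]
    have := heq i
    ring_nf
    ring_nf at this
    linarith
  obtain ⟨m, -, hm⟩ := Finset.exists_max_image Finset.univ f ⟨⟨0, hn⟩, Finset.mem_univ _⟩
  have hm' : ∀ j, f j ≤ f m := fun j => hm j (Finset.mem_univ j)
  have hsum : ∑ j, W m j * f j ≤ f m := by
    calc ∑ j, W m j * f j ≤ ∑ j, W m j * f m := by
          apply Finset.sum_le_sum
          intro j _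
          exact mul_le_mul_of_nonneg_left (hm' j) (hW0 m j)
      _ = f m := by rw [← Finset.sum_mul, hWrow m, one_mul]
  have hlm := hl m
  have hfm0 : f m ≤ 0 := by
    have h1 := hfe m
    nlinarith [hf0 m]
  have hfm : f m = 0 := le_antisymm hfm0 (hf0 m)
  intro i
  have : f i = 0 := le_antisymm (hfm ▸ hm' i) (hf0 i)
  simp [hf] at this
  linarith

/-- Proposition 3, consensus equilibria of the uncontrolled dynamics. -/
theorem consensus_equilibria
    (n : ℕ) (A W : Fin n → Fin n → ℝ) (l b : Fin n → ℝ)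
    (hA0 : ∀ i j, 0 ≤ A i j) (hA1 : ∀ i j, A i j ≤ 1) (hArow : ∀ i, ∑ j, A i j = 1)
    (hW0 : ∀ i j, 0 ≤ W i j) (hW1 : ∀ i j, W i j ≤ 1) (hWrow : ∀ i, ∑ j, W i j = 1)
    (hl : ∀ i, 0 < l i ∧ l i ≤ 1) (hb : ∀ i, 0 < b i ∧ b i ≤ 1) :
    UncontrolledEquilibrium n A W l b (fun _ => 1) (fun _ => 1) ∧
    UncontrolledEquilibrium n A W l b (fun _ => -1) (fun _ => -1) ∧
    ∀ x y : Fin n → ℝ, UncontrolledEquilibrium n A W l b x y →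
      (∀ i j : Fin n, x i = x j) →
      ((x = fun _ => 1) ∧ (y = fun _ => 1)) ∨
        ((x = fun _ => -1) ∧ (y = fun _ => -1)) := by
  have hsumW : ∀ i, (∑ j, W i j * (1:ℝ)) = 1 := fun i => by simp [hWrow i]
  have hsumA : ∀ i, (∑ j, A i j * (1:ℝ)) = 1 := fun i => by simp [hArow i]
  have hsumW' : ∀ i, (∑ j, W i j * (-1:ℝ)) = -1 := fun i => by
    simp [← Finset.sum_mul, hWrow i]
  have hsumA' : ∀ i, (∑ j, A i j * (-1:ℝ)) = -1 := fun i => by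
    simp [← Finset.sum_mul, hArow i]
  refine ⟨⟨fun i => Or.inr rfl, fun i => ⟨by norm_num, le_refl 1⟩, ?_, ?_⟩,
    ⟨fun i => Or.inl rfl, fun i => ⟨le_refl _, by norm_num⟩, ?_, ?_⟩, ?_⟩
  · intro i
    simp only [delta, one_mul, mul_one, hWrow i, hArow i]
    have h1 := hl i; have h2 := hb i
    nlinarith
  · intro i; rw [hsumW i]; ring
  · intro i
    simp only [delta, hsumW' i, hsumA' i]
    have h1 := hl i; have h2 := hb i
    nlinarith
  · intro i; rw [hsumW' i]; ring
  · intro x y ⟨hx1, hy1, _, hyeq⟩ hcons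
    rcases Nat.eq_zero_or_pos n with hn | hn
    · left
      constructor <;> funext i <;> exact absurd i.2 (by omega)
    rcases hx1 ⟨0, hn⟩ with hc | hc
    · right
      have hxall : ∀ i, x i = -1 := fun i => (hcons i ⟨0, hn⟩).trans hc
      have hy1' : ∀ i, (fun j => -(y j)) i = 1 := by
        apply aux_fixed_one n W l _ hW0 hWrow hl
        · intro i; linarith [(hy1 i).1]
        · intro i
          have := hyeq i
          rw [hxall i] at this
          have hsw : ∑ j, W i j * -(y j) = -∑ j, W i j * y j := by
            simp [mul_neg, Finset.sum_neg_distrib]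
          simp only [hsw]
          linarith
      have hy : ∀ i, y i = -1 := fun i => by have := hy1' i; simp at this; linarith
      exact ⟨funext hxall, funext hy⟩
    · left
      have hxall : ∀ i, x i = 1 := fun i => (hcons i ⟨0, hn⟩).trans hc
      have hy : ∀ i, y i = 1 := by
        apply aux_fixed_one n W l y hW0 hWrow hl (fun i => (hy1 i).2)
        intro i
        have := hyeq i
        rw [hxall i, mul_one] at this
        exact this
      exact ⟨funext hxall, funext hy⟩
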